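/- arXiv:2605.28455 — 4 statements merged into one kernel-verified Lean document; each statement's English description precedes it below -/
import Mathlib

section
/- Let (A_n)_{n≥1} be a strictly stationary ergodic process of nonnegative column-allowable p×p matrices with E[max(log‖A₁‖,0)] < ∞, which is weakly sequentially primitive; assume the first two Lyapunov exponents λ₁, λ₂ exist as almost-sure limits of (1/n)log σ¹_n and (1/n)log σ²_n with λ₁ − λ₂ > 0, and assume the weak subexponentiality condition on ratios of entries of M_n. Then there exists a measurable random vector v¹ ∈ ℝ^p which almost surely has all coordinates strictly positive, such that for every x ∈ ℝ^p, every nonnegative nonzero w ∈ ℝ^p, and every i ∈ {1,…,p}, almost surely limsup_{n→∞, over those n with e_iᵀM_n ≠ 0} (1/n) log | (e_iᵀM_n x)/(e_iᵀM_n w) − (v¹·x)/(v¹·w) | ≤ −(λ₁ − λ₂). -/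
open MeasureTheory Filter Matrix
open scoped ENNReal

/-- `elog x` is the extended-real logarithm of a nonnegative real number,
with `elog x = -∞` for `x ≤ 0`. -/
noncomputable def elog (x : ℝ) : EReal := if x ≤ 0 then ⊥ else ((Real.log x : ℝ) : EReal)

/-- `Mprod A n = A (n-1) * ⋯ * A 0`, i.e. the product `M_n = A_n A_{n-1} ⋯ A_1`
of the first `n` matrices of the (0-indexed) sequence `A`. -/
def Mprod {p : ℕ} (A : ℕ → Matrix (Fin p) (Fin p) ℝ) : ℕ → Matrix (Fin p) (Fin p) ℝ
  | 0 => 1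
  | n + 1 => A n * Mprod A n

/-- Every row of `M` is either strictly positive or identically zero. -/
def RowsPosOrZero {p : ℕ} (M : Matrix (Fin p) (Fin p) ℝ) : Prop :=
  ∀ i, (∀ j, 0 < M i j) ∨ (∀ j, M i j = 0)

/-- `A` is nonnegative and column-allowable: each column contains a strictly positive entry. -/
def ColAllowable {p : ℕ} (A : Matrix (Fin p) (Fin p) ℝ) : Prop :=
  (∀ i j, 0 ≤ A i j) ∧ ∀ j, ∃ i, 0 < A i j

/-- `M = U * S * V` is a singular value decomposition: `U, V` orthogonal and `S` diagonal
with nonnegative nonincreasing diagonal entries. -/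
def IsSVD {p : ℕ} (M U S V : Matrix (Fin p) (Fin p) ℝ) : Prop :=
  Uᵀ * U = 1 ∧ U * Uᵀ = 1 ∧ Vᵀ * V = 1 ∧ V * Vᵀ = 1 ∧
  (∀ i j, i ≠ j → S i j = 0) ∧ (∀ i, 0 ≤ S i i) ∧
  (∀ i j : Fin p, i ≤ j → S j j ≤ S i i) ∧ M = U * S * V

/-- A norm on matrices (all norms on a finite-dimensional space are equivalent). -/
noncomputable def matNorm {p : ℕ} (M : Matrix (Fin p) (Fin p) ℝ) : ℝ := ∑ i, ∑ j, |M i j|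

/-- Total variation norm of a vector: `‖v‖_TV = (1/2) ∑ i |v i|`. -/
noncomputable def tvNorm {p : ℕ} (v : Fin p → ℝ) : ℝ := (1 / 2) * ∑ i, |v i|

/-!
Normalise every nonzero row of `Mₙ` to a probability vector. For `m ≥ n` we have `Mₘ = P Mₙ`
with `P ≥ 0`, so the normalised rows of `Mₘ`, and its normalised column sums, are convex
combinations of the normalised rows of `Mₙ`: the convex hulls of these rows are nested. Once all
rows are positive or zero, comparability of entries up to `e^{εn}` gives every nonzero row of `Mₙ`
a mass of at least `σ¹ₙ e^{-εn} / p`, and splitting off the rank-one part of the singular value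
decomposition bounds the diameter of the hull by `O(e^{2εn} σ²ₙ / σ¹ₙ)`, which decays at every
rate slower than `λ₁ - λ₂`. Hence the normalised column sums converge to a point `v¹` of every
hull, positive because it lies in the hull at time `τ`, and the normalised rows, hence the ratios
`eᵢᵀMₙx / eᵢᵀMₙw`, approach `v¹` and `(v¹·x) / (v¹·w)` at that rate.
-/

section NonnegMatrix

variable {p : ℕ}

lemma mprod_succ (A : ℕ → Matrix (Fin p) (Fin p) ℝ) (n : ℕ) :
    Mprod A (n + 1) = A n * Mprod A n := rfl

lemma mul_apply_nonneg {B M : Matrix (Fin p) (Fin p) ℝ} (hB : ∀ i j, 0 ≤ B i j)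
    (hM : ∀ i j, 0 ≤ M i j) (i j : Fin p) : 0 ≤ (B * M) i j := by
  rw [Matrix.mul_apply]
  exact Finset.sum_nonneg fun k _ => mul_nonneg (hB i k) (hM k j)

lemma one_apply_nonneg (i j : Fin p) : 0 ≤ (1 : Matrix (Fin p) (Fin p) ℝ) i j := by
  by_cases h : i = j <;> simp [Matrix.one_apply, h]

lemma mprod_nonneg {A : ℕ → Matrix (Fin p) (Fin p) ℝ} (hA : ∀ n i j, 0 ≤ A n i j) :
    ∀ n i j, 0 ≤ Mprod A n i j
  | 0 => one_apply_nonneg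
  | n + 1 => mul_apply_nonneg (hA n) (mprod_nonneg hA n)

lemma exists_mprod_eq_mul {A : ℕ → Matrix (Fin p) (Fin p) ℝ} (hA : ∀ n i j, 0 ≤ A n i j)
    {n m : ℕ} (h : n ≤ m) :
    ∃ P : Matrix (Fin p) (Fin p) ℝ, (∀ i j, 0 ≤ P i j) ∧ Mprod A m = P * Mprod A n := by
  induction m, h using Nat.le_induction with
  | base => exact ⟨1, one_apply_nonneg, (Matrix.one_mul _).symm⟩
  | succ m _ ih =>
    obtain ⟨P, hP, hPM⟩ := ih
    exact ⟨A m * P, mul_apply_nonneg (hA m) hP, by rw [mprod_succ, hPM, Matrix.mul_assoc]⟩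

lemma exists_pos_mprod_apply {A : ℕ → Matrix (Fin p) (Fin p) ℝ}
    (hA : ∀ n, ColAllowable (A n)) : ∀ n j, ∃ i, 0 < Mprod A n i j
  | 0, j => ⟨j, by simp [Mprod]⟩
  | n + 1, j => by
    obtain ⟨k, hk⟩ := exists_pos_mprod_apply hA n j
    obtain ⟨i, hi⟩ := (hA n).2 k
    refine ⟨i, ?_⟩
    rw [mprod_succ, Matrix.mul_apply]
    refine Finset.sum_pos' (fun l _ => mul_nonneg ((hA n).1 i l) ?_) ⟨k, by simp, mul_pos hi hk⟩
    exact mprod_nonneg (fun n => (hA n).1) n l j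

lemma RowsPosOrZero.mul {B M : Matrix (Fin p) (Fin p) ℝ} (hB : ∀ i j, 0 ≤ B i j)
    (hM : ∀ i j, 0 ≤ M i j) (h : RowsPosOrZero M) : RowsPosOrZero (B * M) := by
  intro i
  by_cases hex : ∃ k, 0 < B i k ∧ ∀ j, 0 < M k j
  · obtain ⟨k, hBk, hMk⟩ := hex
    refine Or.inl fun j => ?_
    rw [Matrix.mul_apply]
    exact Finset.sum_pos' (fun l _ => mul_nonneg (hB i l) (hM l j))
      ⟨k, by simp, mul_pos hBk (hMk j)⟩
  · push Not at hex
    refine Or.inr fun j => ?_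
    rw [Matrix.mul_apply]
    refine Finset.sum_eq_zero fun k _ => ?_
    rcases (hB i k).eq_or_lt with hk | hk
    · rw [← hk, zero_mul]
    · obtain ⟨j', hj'⟩ := hex k hk
      rcases h k with hpos | hzero
      · exact absurd (hpos j') hj'.not_gt
      · rw [hzero j, mul_zero]

lemma sum_pos_of_nonneg_of_ne_zero {v : Fin p → ℝ} (hv : ∀ j, 0 ≤ v j) (h : v ≠ 0) :
    0 < ∑ j, v j := by
  obtain ⟨j, hj⟩ := Function.ne_iff.mp h
  exact Finset.sum_pos' (fun j _ => hv j) ⟨j, by simp, (hv j).lt_of_ne' hj⟩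

end NonnegMatrix

section RowDirections

variable {p : ℕ}

noncomputable def sumNormalize (v : Fin p → ℝ) : Fin p → ℝ := (∑ j, v j)⁻¹ • v

def rowDirections (M : Matrix (Fin p) (Fin p) ℝ) : Set (Fin p → ℝ) :=
  (fun k => sumNormalize (M k)) '' {k | M k ≠ 0}

lemma sum_sumNormalize {v : Fin p → ℝ} (h : ∑ j, v j ≠ 0) : ∑ j, sumNormalize v j = 1 := by
  simp only [sumNormalize, Pi.smul_apply, smul_eq_mul, ← Finset.mul_sum, inv_mul_cancel₀ h]

lemma rowDirections_finite (M : Matrix (Fin p) (Fin p) ℝ) : (rowDirections M).Finite :=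
  (Set.toFinite _).image _

lemma sumNormalize_vecMul_mem_convexHull {u : Fin p → ℝ} {M : Matrix (Fin p) (Fin p) ℝ}
    (hu : ∀ k, 0 ≤ u k) (hM : ∀ i j, 0 ≤ M i j) (h : u ᵥ* M ≠ 0) :
    sumNormalize (u ᵥ* M) ∈ convexHull ℝ (rowDirections M) := by
  classical
  set t := Finset.univ.filter fun k => M k ≠ 0
  have hrow : ∀ k ∈ t, 0 < ∑ j, M k j := fun k hk =>
    sum_pos_of_nonneg_of_ne_zero (hM k) (Finset.mem_filter.mp hk).2
  have hvec : u ᵥ* M = ∑ k ∈ t, (u k * ∑ j, M k j) • sumNormalize (M k) := by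
    rw [Matrix.vecMul_eq_sum, ← Finset.sum_filter_add_sum_filter_not Finset.univ (fun k => M k ≠ 0)]
    rw [Finset.sum_eq_zero (s := Finset.univ.filter fun k => ¬ M k ≠ 0)
      (fun k hk => by rw [not_not.mp (Finset.mem_filter.mp hk).2, smul_zero]), add_zero]
    refine Finset.sum_congr rfl fun k hk => ?_
    rw [sumNormalize, smul_smul, mul_assoc, mul_inv_cancel₀ (hrow k hk).ne', mul_one]
  have htotal : ∑ j, (u ᵥ* M) j = ∑ k ∈ t, u k * ∑ j, M k j := by
    conv_lhs => rw [hvec]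
    simp only [Finset.sum_apply, Pi.smul_apply, smul_eq_mul]
    rw [Finset.sum_comm]
    refine Finset.sum_congr rfl fun k hk => ?_
    rw [← Finset.mul_sum, sum_sumNormalize (hrow k hk).ne', mul_one]
  have hpos : 0 < ∑ j, (u ᵥ* M) j := sum_pos_of_nonneg_of_ne_zero (fun j => by
    simp only [Matrix.vecMul, dotProduct]
    exact Finset.sum_nonneg fun k _ => mul_nonneg (hu k) (hM k j)) h
  have := t.centerMass_mem_convexHull (R := ℝ) (s := rowDirections M)
    (fun k _ => mul_nonneg (hu k) (hrow k ‹_›).le) (htotal ▸ hpos)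
    (z := fun k => sumNormalize (M k)) (fun k hk => ⟨k, (Finset.mem_filter.mp hk).2, rfl⟩)
  rwa [Finset.centerMass, ← htotal, ← hvec] at this

lemma RowsPosOrZero.pos_of_mem_convexHull {M : Matrix (Fin p) (Fin p) ℝ} (h : RowsPosOrZero M)
    {y : Fin p → ℝ} (hy : y ∈ convexHull ℝ (rowDirections M)) (j : Fin p) : 0 < y j := by
  refine convexHull_min (t := Set.univ.pi fun _ => Set.Ioi 0) ?_ (convex_pi fun _ _ => convex_Ioi 0)
    hy j (Set.mem_univ j)
  rintro _ ⟨k, hk, rfl⟩ l -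
  have hpos : ∀ l, 0 < M k l := (h k).resolve_right fun hz => hk (funext hz)
  exact mul_pos (inv_pos.mpr (Finset.sum_pos (fun l _ => hpos l) ⟨l, Finset.mem_univ l⟩)) (hpos l)

end RowDirections

section SingularValues

variable {p : ℕ} {M U S V : Matrix (Fin p) (Fin p) ℝ}

lemma abs_apply_le_one_of_mul_transpose_eq_one (h : U * Uᵀ = 1) (a b : Fin p) : |U a b| ≤ 1 := by
  have hU : U ∈ Matrix.unitaryGroup (Fin p) ℝ := by
    rwa [Matrix.mem_unitaryGroup_iff, Matrix.star_eq_conjTranspose,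
      Matrix.conjTranspose_eq_transpose_of_trivial]
  simpa using entry_norm_bound_of_unitary hU a b

namespace IsSVD

lemma abs_left_le_one (h : IsSVD M U S V) (a c : Fin p) : |U a c| ≤ 1 :=
  abs_apply_le_one_of_mul_transpose_eq_one h.2.1 a c

lemma abs_right_le_one (h : IsSVD M U S V) (c b : Fin p) : |V c b| ≤ 1 :=
  abs_apply_le_one_of_mul_transpose_eq_one h.2.2.2.1 c b

lemma diag_nonneg (h : IsSVD M U S V) (i : Fin p) : 0 ≤ S i i := h.2.2.2.2.2.1 i

lemma diag_anti (h : IsSVD M U S V) {i j : Fin p} (hij : i ≤ j) : S j j ≤ S i i :=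
  h.2.2.2.2.2.2.1 i j hij

lemma apply_eq_sum (h : IsSVD M U S V) (a b : Fin p) : M a b = ∑ c, U a c * S c c * V c b := by
  rw [h.2.2.2.2.2.2.2, Matrix.mul_apply]
  refine Finset.sum_congr rfl fun c _ => ?_
  rw [Matrix.mul_apply, Finset.sum_eq_single c (fun d _ hd => by rw [h.2.2.2.2.1 d c hd, mul_zero])
    (by simp)]

lemma abs_sub_apply_le (h : IsSVD M U S V) (i₀ : Fin p) {s : ℝ} (hs₀ : 0 ≤ s)
    (hs : ∀ c, c ≠ i₀ → S c c ≤ s) (a b : Fin p) : |M a b - U a i₀ * S i₀ i₀ * V i₀ b| ≤ p * s := by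
  rw [h.apply_eq_sum, ← Finset.add_sum_erase _ _ (Finset.mem_univ i₀), add_sub_cancel_left]
  calc |∑ c ∈ Finset.univ.erase i₀, U a c * S c c * V c b|
      ≤ ∑ c ∈ Finset.univ.erase i₀, |U a c * S c c * V c b| := Finset.abs_sum_le_sum_abs _ _
    _ ≤ ∑ _c ∈ Finset.univ.erase i₀, s := Finset.sum_le_sum fun c hc => by
        rw [abs_mul, abs_mul, abs_of_nonneg (h.diag_nonneg c)]
        have hU := h.abs_left_le_one a c
        have hV := h.abs_right_le_one c b
        have hS := hs c (Finset.ne_of_mem_erase hc)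
        have := h.diag_nonneg c
        calc |U a c| * S c c * |V c b| ≤ 1 * S c c * 1 := by gcongr
          _ ≤ s := by linarith
    _ ≤ p * s := by
        rw [Finset.sum_const, nsmul_eq_mul]
        gcongr
        exact (Finset.card_erase_le).trans_eq (Finset.card_fin p)

lemma diag_le_sum (h : IsSVD M U S V) (hM : ∀ i j, 0 ≤ M i j) (c : Fin p) :
    S c c ≤ ∑ a, ∑ b, M a b := by
  have hS : S = Uᵀ * M * Vᵀ := by
    rw [h.2.2.2.2.2.2.2, ← Matrix.mul_assoc, ← Matrix.mul_assoc, h.1, Matrix.one_mul,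
      Matrix.mul_assoc, h.2.2.2.1, Matrix.mul_one]
  rw [hS, Matrix.mul_apply]
  simp_rw [Matrix.mul_apply, Matrix.transpose_apply, Finset.sum_mul]
  rw [Finset.sum_comm]
  gcongr with a _ b _
  have hU := h.abs_left_le_one a c
  have hV := h.abs_right_le_one c b
  calc U a c * M a b * V c b ≤ |U a c| * M a b * |V c b| := by
        rw [← abs_of_nonneg (hM a b), ← abs_mul, ← abs_mul, abs_of_nonneg (hM a b)]
        exact le_abs_self _
    _ ≤ 1 * M a b * 1 := by have := hM a b; gcongr
    _ = M a b := by ring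

end IsSVD

end SingularValues

section Comparable

variable {p : ℕ}

def EntriesComparable (M : Matrix (Fin p) (Fin p) ℝ) (t : ℝ) : Prop :=
  ∀ i j k, M j k = 0 ∨ M i k ≤ t * M j k

lemma EntriesComparable.sum_sum_le {M : Matrix (Fin p) (Fin p) ℝ} {t : ℝ}
    (h : EntriesComparable M t) {a : Fin p} (ha : ∀ b, 0 < M a b) :
    ∑ i, ∑ b, M i b ≤ p * t * ∑ b, M a b :=
  calc ∑ i, ∑ b, M i b ≤ ∑ _i : Fin p, ∑ b, t * M a b := by
        gcongr with i _ b _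
        exact (h i a b).resolve_left (ha b).ne'
    _ = p * t * ∑ b, M a b := by
        rw [Finset.sum_const, Finset.card_univ, Fintype.card_fin, nsmul_eq_mul, ← Finset.mul_sum,
          mul_assoc]

lemma EntriesComparable.mono {M : Matrix (Fin p) (Fin p) ℝ} {t t' : ℝ} (hM : ∀ i j, 0 ≤ M i j)
    (h : EntriesComparable M t) (htt' : t ≤ t') : EntriesComparable M t' := fun i j k =>
  (h i j k).imp_right fun hle => hle.trans (mul_le_mul_of_nonneg_right htt' (hM j k))

end Comparable

section RowDiameter

variable {p : ℕ} {M U S V : Matrix (Fin p) (Fin p) ℝ}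

-- Writing `m = α q + e` and `m' = α' q + e'`, the `α α'` terms cancel in the cross difference.
lemma abs_mul_sum_sub_mul_sum_le {m m' q : Fin p → ℝ} {α α' s η : ℝ} (hq : ∀ b, |q b| ≤ 1)
    (hα : |α| ≤ s) (hα' : |α'| ≤ s) (hηs : η ≤ s) (hm : ∀ b, |m b - α * q b| ≤ η)
    (hm' : ∀ b, |m' b - α' * q b| ≤ η) (j : Fin p) :
    |m j * ∑ b, m' b - m' j * ∑ b, m b| ≤ 6 * p * s * η := by
  set e := fun b => m b - α * q b
  set e' := fun b => m' b - α' * q b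
  have hη : 0 ≤ η := (abs_nonneg _).trans (hm j)
  have hsum_le : ∀ f : Fin p → ℝ, ∀ c, (∀ b, |f b| ≤ c) → |∑ b, f b| ≤ p * c := fun f c hf =>
    (Finset.abs_sum_le_sum_abs _ _).trans <| (Finset.sum_le_sum fun b _ => hf b).trans_eq <| by simp
  have hQ := hsum_le q 1 hq
  have hF := hsum_le e η hm
  have hF' := hsum_le e' η hm'
  have hdec : m j * ∑ b, m' b - m' j * ∑ b, m b =
      α * (q j * ∑ b, e' b - e' j * ∑ b, q b) + α' * (e j * ∑ b, q b - q j * ∑ b, e b) +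
        (e j * ∑ b, e' b - e' j * ∑ b, e b) := by
    simp only [e, e', Finset.sum_sub_distrib, ← Finset.mul_sum]
    ring
  have hcross : ∀ a b c d : ℝ, ∀ x y, |a| ≤ x → |b| ≤ p * y → |c| ≤ y → |d| ≤ p * x →
      |a * b - c * d| ≤ 2 * p * x * y := fun a b c d x y ha hb hc hd =>
    (abs_sub _ _).trans <| by
      rw [abs_mul, abs_mul]
      have hx : 0 ≤ x := (abs_nonneg _).trans ha
      have hy : 0 ≤ y := (abs_nonneg _).trans hc
      nlinarith [mul_le_mul ha hb (abs_nonneg _) hx, mul_le_mul hc hd (abs_nonneg _) hy]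
  have hqe := hcross _ _ _ _ 1 η (hq j) hF' (hm' j) (by simpa using hQ)
  have heq := hcross _ _ _ _ η 1 (hm j) (by simpa using hQ) (hq j) hF
  have hee := hcross _ _ _ _ η η (hm j) hF' (hm' j) hF
  rw [hdec]
  refine (abs_add_three _ _ _).trans ?_
  rw [abs_mul, abs_mul]
  have hp : (0 : ℝ) ≤ p := Nat.cast_nonneg p
  have hs : 0 ≤ s := (abs_nonneg _).trans hα
  nlinarith [mul_le_mul hα hqe (abs_nonneg _) hs, mul_le_mul hα' heq (abs_nonneg _) hs,
    mul_le_mul_of_nonneg_left hηs (by positivity : (0 : ℝ) ≤ 2 * p * η)]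

-- By comparability every nonzero row carries a share `1 / (p t)` of the total mass, which is `≥ σ`.
lemma IsSVD.div_le_sum_row (h : IsSVD M U S V) (hM : ∀ i j, 0 ≤ M i j) (hrz : RowsPosOrZero M)
    {t : ℝ} (ht : 0 < t) (hc : EntriesComparable M t) (i₀ : Fin p) {a : Fin p} (ha : M a ≠ 0) :
    S i₀ i₀ / (p * t) ≤ ∑ b, M a b := by
  have hpos : ∀ b, 0 < M a b := (hrz a).resolve_right fun h0 => ha (funext h0)
  rw [div_le_iff₀ (mul_pos (Nat.cast_pos.mpr i₀.pos) ht), mul_comm]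
  exact (h.diag_le_sum hM i₀).trans (hc.sum_sum_le hpos)

lemma IsSVD.dist_le_of_mem_rowDirections (h : IsSVD M U S V) (hM : ∀ i j, 0 ≤ M i j)
    (hrz : RowsPosOrZero M) {t : ℝ} (ht : 0 < t) (hc : EntriesComparable M t) (i₀ : Fin p)
    {s : ℝ} (hs₀ : 0 ≤ s) (hs : ∀ c, c ≠ i₀ → S c c ≤ s) (hsσ : s ≤ S i₀ i₀) (hσ : 0 < S i₀ i₀)
    {y z : Fin p → ℝ} (hy : y ∈ rowDirections M) (hz : z ∈ rowDirections M) :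
    dist y z ≤ 6 * p ^ 5 * t ^ 2 * (s / S i₀ i₀) := by
  obtain ⟨k, hk, rfl⟩ := hy
  obtain ⟨l, hl, rfl⟩ := hz
  set σ := S i₀ i₀
  have hp : (1 : ℝ) ≤ p := Nat.one_le_cast.mpr i₀.pos
  set ρ := σ / (p * t)
  have hρ : 0 < ρ := by positivity
  have hk' := h.div_le_sum_row hM hrz ht hc i₀ hk
  have hl' := h.div_le_sum_row hM hrz ht hc i₀ hl
  have hk0 := hρ.trans_le hk'
  have hl0 := hρ.trans_le hl'
  have hα : ∀ a, |U a i₀ * σ| ≤ p * σ := fun a => by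
    rw [abs_mul, abs_of_pos hσ]
    have := h.abs_left_le_one a i₀
    nlinarith
  -- each row `M a` is `p s`-close to the multiple `U a i₀ σ` of the top right singular vector
  have hbound := abs_mul_sum_sub_mul_sum_le (h.abs_right_le_one i₀) (hα k) (hα l)
    (mul_le_mul_of_nonneg_left hsσ (Nat.cast_nonneg p)) (h.abs_sub_apply_le i₀ hs₀ hs k)
    (h.abs_sub_apply_le i₀ hs₀ hs l)
  rw [dist_pi_le_iff (by positivity)]
  intro j
  have hdiff : sumNormalize (M k) j - sumNormalize (M l) j =
      (M k j * ∑ b, M l b - M l j * ∑ b, M k b) / ((∑ b, M k b) * ∑ b, M l b) := by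
    simp only [sumNormalize, Pi.smul_apply, smul_eq_mul]
    field_simp
  rw [Real.dist_eq, hdiff, abs_div, abs_of_pos (mul_pos hk0 hl0)]
  calc _ ≤ 6 * p * (p * σ) * (p * s) / (ρ * ρ) :=
        div_le_div₀ (by positivity) (hbound j) (by positivity) (mul_le_mul hk' hl' hρ.le hk0.le)
    _ = 6 * p ^ 5 * t ^ 2 * (s / σ) := by
        simp only [ρ]
        field_simp

end RowDiameter

section ExponentialRates

open Asymptotics

lemma EReal.lt_add_of_neg_sub_lt {a b : EReal} {β : ℝ} (h : -(a - b) < β) : b < a + β := by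
  induction a using EReal.rec with
  | bot => simp at h
  | top => induction b using EReal.rec <;> simp_all
  | coe a =>
    induction b using EReal.rec with
    | bot => simp
    | top => simp at h
    | coe b => norm_cast at h ⊢; linarith

lemma EReal.coe_sub_lt_of_lt_add {a : EReal} {b c : ℝ} (h : (c : EReal) < a + b) :
    ((c - b : ℝ) : EReal) < a := by
  induction a using EReal.rec with
  | bot => simp at h
  | top => exact EReal.coe_lt_top _
  | coe a => norm_cast at h ⊢; linarith

lemma inv_mul_elog_le_iff {n : ℕ} (hn : n ≠ 0) (x b : ℝ) :
    (((n : ℝ)⁻¹ : ℝ) : EReal) * elog x ≤ b ↔ x ≤ Real.exp (b * n) := by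
  have hn' : (0 : ℝ) < n := Nat.cast_pos.mpr (Nat.pos_of_ne_zero hn)
  unfold elog
  split_ifs with hx
  · simp [EReal.coe_mul_bot_of_pos (inv_pos.mpr hn'), hx.trans (Real.exp_pos _).le]
  · rw [← EReal.coe_mul, EReal.coe_le_coe_iff, inv_mul_le_iff₀ hn', mul_comm,
      Real.log_le_iff_le_exp (not_le.mp hx)]

lemma eventually_le_exp_mul_of_tendsto {a b : ℕ → ℝ} {l₁ l₂ : EReal}
    (ha : Tendsto (fun n : ℕ => (((n : ℝ)⁻¹ : ℝ) : EReal) * elog (a n)) atTop (nhds l₁))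
    (hb : Tendsto (fun n : ℕ => (((n : ℝ)⁻¹ : ℝ) : EReal) * elog (b n)) atTop (nhds l₂))
    {β : ℝ} (hβ : -(l₁ - l₂) < β) :
    ∀ᶠ n in atTop, 0 < a n ∧ b n ≤ Real.exp (β * n) * a n := by
  obtain ⟨c, hc₂, hc₁⟩ := EReal.exists_between_coe_real (EReal.lt_add_of_neg_sub_lt hβ)
  filter_upwards [ha.eventually_const_lt (EReal.coe_sub_lt_of_lt_add hc₁),
    hb.eventually_lt_const hc₂, eventually_ne_atTop 0] with n hlow hup hn
  rw [← not_le, inv_mul_elog_le_iff hn, not_le] at hlow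
  refine ⟨(Real.exp_pos _).trans hlow, ?_⟩
  calc b n ≤ Real.exp (c * n) := (inv_mul_elog_le_iff hn _ _).mp hup.le
    _ = Real.exp (β * n) * Real.exp ((c - β) * n) := by rw [← Real.exp_add]; ring_nf
    _ ≤ Real.exp (β * n) * a n := by gcongr

lemma limsup_inv_mul_elog_le {F : Filter ℕ} (hF : F ≤ atTop) {f : ℕ → ℝ} {β : ℝ}
    (h : f =O[F] fun n => Real.exp (β * n)) :
    limsup (fun n : ℕ => (((n : ℝ)⁻¹ : ℝ) : EReal) * elog (f n)) F ≤ β := by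
  obtain ⟨c, hc⟩ := h.bound
  refine EReal.le_of_forall_lt_iff_le.mp fun β' hβ' => ?_
  have hgrow : Tendsto (fun n : ℕ => Real.exp ((β' - β) * n)) atTop atTop :=
    Real.tendsto_exp_atTop.comp <| tendsto_natCast_atTop_atTop.const_mul_atTop <|
      sub_pos.mpr (EReal.coe_lt_coe_iff.mp hβ')
  refine limsup_le_of_le (by isBoundedDefault) ?_
  filter_upwards [hc, hF ((hgrow.eventually_ge_atTop c).and (eventually_ne_atTop 0))]
    with n hn ⟨hcn, hn0⟩
  rw [inv_mul_elog_le_iff hn0]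
  rw [Real.norm_of_nonneg (Real.exp_pos _).le] at hn
  calc f n ≤ ‖f n‖ := Real.le_norm_self _
    _ ≤ c * Real.exp (β * n) := hn
    _ ≤ Real.exp ((β' - β) * n) * Real.exp (β * n) := by gcongr
    _ = Real.exp (β' * n) := by rw [← Real.exp_add]; ring_nf

end ExponentialRates

section Ratios

variable {p : ℕ}

lemma mulVec_div_mulVec_eq {M : Matrix (Fin p) (Fin p) ℝ} {i : Fin p} (h : ∑ j, M i j ≠ 0)
    (x w : Fin p → ℝ) :
    (M *ᵥ x) i / (M *ᵥ w) i = sumNormalize (M i) ⬝ᵥ x / sumNormalize (M i) ⬝ᵥ w := by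
  simp only [sumNormalize, smul_dotProduct, smul_eq_mul]
  exact (mul_div_mul_left _ _ (inv_ne_zero h)).symm

lemma abs_dotProduct_le (y x : Fin p → ℝ) : |y ⬝ᵥ x| ≤ ‖y‖ * ∑ j, |x j| :=
  (Finset.abs_sum_le_sum_abs _ _).trans <| by
    rw [Finset.mul_sum]
    gcongr with j
    rw [abs_mul]
    gcongr
    exact norm_le_pi_norm y j

lemma abs_div_dotProduct_sub_le {u v x w : Fin p → ℝ} (hv : 0 < v ⬝ᵥ w)
    (huv : v ⬝ᵥ w ≤ 2 * (u ⬝ᵥ w)) :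
    |u ⬝ᵥ x / u ⬝ᵥ w - v ⬝ᵥ x / v ⬝ᵥ w| ≤
      2 * ((∑ j, |x j|) * (v ⬝ᵥ w) + |v ⬝ᵥ x| * ∑ j, |w j|) / (v ⬝ᵥ w) ^ 2 * ‖u - v‖ := by
  have hu : 0 < u ⬝ᵥ w := by linarith
  have hx := abs_dotProduct_le (u - v) x
  have hw := abs_dotProduct_le (u - v) w
  rw [sub_dotProduct] at hx hw
  have hid : u ⬝ᵥ x / u ⬝ᵥ w - v ⬝ᵥ x / v ⬝ᵥ w =
      ((u ⬝ᵥ x - v ⬝ᵥ x) * (v ⬝ᵥ w) - (v ⬝ᵥ x) * (u ⬝ᵥ w - v ⬝ᵥ w)) / ((u ⬝ᵥ w) * (v ⬝ᵥ w)) := by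
    field_simp
    ring
  rw [hid, abs_div, abs_of_pos (mul_pos hu hv), div_le_iff₀ (mul_pos hu hv)]
  have hnum : |(u ⬝ᵥ x - v ⬝ᵥ x) * (v ⬝ᵥ w) - (v ⬝ᵥ x) * (u ⬝ᵥ w - v ⬝ᵥ w)| ≤
      ((∑ j, |x j|) * (v ⬝ᵥ w) + |v ⬝ᵥ x| * ∑ j, |w j|) * ‖u - v‖ := by
    refine (abs_sub _ _).trans ?_
    rw [abs_mul, abs_mul, abs_of_pos hv]
    nlinarith [mul_le_mul_of_nonneg_right hx hv.le,
      mul_le_mul_of_nonneg_left hw (abs_nonneg (v ⬝ᵥ x))]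
  calc _ ≤ ((∑ j, |x j|) * (v ⬝ᵥ w) + |v ⬝ᵥ x| * ∑ j, |w j|) * ‖u - v‖ := hnum
    _ ≤ ((∑ j, |x j|) * (v ⬝ᵥ w) + |v ⬝ᵥ x| * ∑ j, |w j|) * ‖u - v‖ * (2 * (u ⬝ᵥ w) / v ⬝ᵥ w) :=
        le_mul_of_one_le_right ((abs_nonneg _).trans hnum) ((one_le_div hv).mpr huv)
    _ = _ := by field_simp

open Asymptotics in
lemma isBigO_mulVec_div_mulVec_sub {M : ℕ → Matrix (Fin p) (Fin p) ℝ}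
    (hM : ∀ n i j, 0 ≤ M n i j) {v : Fin p → ℝ} (hv : ∀ j, 0 < v j)
    (hvM : ∀ n, v ∈ convexHull ℝ (rowDirections (M n)))
    (hdiam : Tendsto (fun n => Metric.diam (rowDirections (M n))) atTop (nhds 0))
    {x w : Fin p → ℝ} (hw : ∀ j, 0 ≤ w j) (hw₀ : w ≠ 0) (i : Fin p) :
    (fun n => (M n *ᵥ x) i / (M n *ᵥ w) i - (∑ j, v j * x j) / (∑ j, v j * w j))
      =O[atTop ⊓ principal {n : ℕ | M n i ≠ 0}] fun n => Metric.diam (rowDirections (M n)) := by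
  have hvw : 0 < v ⬝ᵥ w := by
    obtain ⟨j, hj⟩ := Function.ne_iff.mp hw₀
    exact Finset.sum_pos' (fun j _ => mul_nonneg (hv j).le (hw j))
      ⟨j, by simp, mul_pos (hv j) ((hw j).lt_of_ne' hj)⟩
  have hsmall : ∀ᶠ n in atTop ⊓ principal {n : ℕ | M n i ≠ 0},
      Metric.diam (rowDirections (M n)) * ∑ j, |w j| < v ⬝ᵥ w / 2 :=
    (inf_le_left : _ ≤ atTop) <|
      (hdiam.mul_const _).eventually_lt_const (by rw [zero_mul]; exact half_pos hvw)
  refine IsBigO.of_bound (2 * ((∑ j, |x j|) * (v ⬝ᵥ w) + |v ⬝ᵥ x| * ∑ j, |w j|) / (v ⬝ᵥ w) ^ 2) ?_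
  filter_upwards [mem_inf_of_right (mem_principal_self _), hsmall] with n (hn : M n i ≠ 0) hsm
  have hdist : dist (sumNormalize (M n i)) v ≤ Metric.diam (rowDirections (M n)) := by
    rw [← convexHull_diam]
    exact Metric.dist_le_diam_of_mem ((rowDirections_finite _).isCompact_convexHull ℝ).isBounded
      (subset_convexHull ℝ _ ⟨i, hn, rfl⟩) (hvM n)
  have huv : v ⬝ᵥ w ≤ 2 * (sumNormalize (M n i) ⬝ᵥ w) := by
    have hw' := abs_dotProduct_le (sumNormalize (M n i) - v) w
    rw [sub_dotProduct, ← dist_eq_norm] at hw'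
    have := mul_le_mul_of_nonneg_right hdist (by positivity : (0 : ℝ) ≤ ∑ j, |w j|)
    linarith [neg_abs_le (sumNormalize (M n i) ⬝ᵥ w - v ⬝ᵥ w)]
  rw [mulVec_div_mulVec_eq (sum_pos_of_nonneg_of_ne_zero (hM n i) hn).ne',
    Real.norm_of_nonneg Metric.diam_nonneg]
  refine (abs_div_dotProduct_sub_le hvw huv).trans ?_
  rw [← dist_eq_norm]
  gcongr

end Ratios

section ProductLimit

open Asymptotics

variable {p : ℕ} {A S : ℕ → Matrix (Fin p) (Fin p) ℝ}

lemma vecMul_mprod_ne_zero (hA : ∀ n, ColAllowable (A n)) (hp : 0 < p) (n : ℕ) :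
    (1 : Fin p → ℝ) ᵥ* Mprod A n ≠ 0 := by
  obtain ⟨i, hi⟩ := exists_pos_mprod_apply hA n ⟨0, hp⟩
  refine Function.ne_iff.mpr ⟨⟨0, hp⟩, ne_of_gt ?_⟩
  simp only [Matrix.vecMul, dotProduct, Pi.one_apply, one_mul, Pi.zero_apply]
  exact Finset.sum_pos' (fun k _ => mprod_nonneg (fun n => (hA n).1) n k _) ⟨i, by simp, hi⟩

lemma sumNormalize_colSums_mem_convexHull (hA : ∀ n, ColAllowable (A n)) (hp : 0 < p) {n m : ℕ}
    (h : n ≤ m) :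
    sumNormalize (1 ᵥ* Mprod A m) ∈ convexHull ℝ (rowDirections (Mprod A n)) := by
  have hnn : ∀ n i j, 0 ≤ A n i j := fun n => (hA n).1
  obtain ⟨P, hP, hPM⟩ := exists_mprod_eq_mul hnn h
  have hne := vecMul_mprod_ne_zero hA hp m
  rw [hPM, ← Matrix.vecMul_vecMul] at hne ⊢
  refine sumNormalize_vecMul_mem_convexHull (fun k => ?_) (mprod_nonneg hnn n) hne
  simpa [Matrix.vecMul, dotProduct] using Finset.sum_nonneg fun i _ => hP i k

lemma exists_tendsto_colSums (hA : ∀ n, ColAllowable (A n)) (hp : 0 < p)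
    (hdiam : Tendsto (fun n => Metric.diam (rowDirections (Mprod A n))) atTop (nhds 0)) :
    ∃ v, Tendsto (fun n => sumNormalize (1 ᵥ* Mprod A n)) atTop (nhds v) ∧
      ∀ n, v ∈ convexHull ℝ (rowDirections (Mprod A n)) := by
  have hcompact : ∀ n, IsCompact (convexHull ℝ (rowDirections (Mprod A n))) := fun n =>
    (rowDirections_finite _).isCompact_convexHull ℝ
  have hcauchy : CauchySeq fun n => sumNormalize (1 ᵥ* Mprod A n) := by
    refine cauchySeq_of_le_tendsto_0 _ (fun n m N hn hm => ?_) hdiam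
    rw [← convexHull_diam]
    exact Metric.dist_le_diam_of_mem (hcompact N).isBounded
      (sumNormalize_colSums_mem_convexHull hA hp hn) (sumNormalize_colSums_mem_convexHull hA hp hm)
  obtain ⟨v, hv⟩ := cauchySeq_tendsto_of_complete hcauchy
  exact ⟨v, hv, fun n => (hcompact n).isClosed.mem_of_tendsto hv <|
    (eventually_ge_atTop n).mono fun m hm => sumNormalize_colSums_mem_convexHull hA hp hm⟩

lemma isBigO_diam_rowDirections (hA : ∀ n, ColAllowable (A n)) {τ₀ : ℕ}
    (hτ : RowsPosOrZero (Mprod A τ₀)) (hS : ∀ n, ∃ U V, IsSVD (Mprod A n) U (S n) V)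
    {i₀ i₁ : Fin p} (hi₁ : ∀ c, c ≠ i₀ → i₁ ≤ c) (hi₀ : i₀ ≤ i₁) {γ : EReal}
    (hgap : ∀ β : ℝ, γ < β → ∀ᶠ n in atTop,
      0 < S n i₀ i₀ ∧ S n i₁ i₁ ≤ Real.exp (β * n) * S n i₀ i₀)
    (hsub : ∀ ε : ℝ, 0 < ε → ∀ᶠ n in atTop, EntriesComparable (Mprod A n) (Real.exp (ε * n)))
    {β : ℝ} (hβ : γ < β) :
    (fun n => Metric.diam (rowDirections (Mprod A n))) =O[atTop] fun n => Real.exp (β * n) := by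
  have hnn : ∀ n i j, 0 ≤ A n i j := fun n => (hA n).1
  obtain ⟨β', hγβ', hβ'β⟩ := EReal.exists_between_coe_real hβ
  have hε : 0 < (β - β') / 2 := by linarith [EReal.coe_lt_coe_iff.mp hβ'β]
  refine IsBigO.of_bound (6 * p ^ 5) ?_
  filter_upwards [hgap β' hγβ', hsub _ hε, eventually_ge_atTop τ₀] with n ⟨hσ, hratio⟩ hcomp hn
  obtain ⟨U, V, hsvd⟩ := hS n
  obtain ⟨P, hP, hPM⟩ := exists_mprod_eq_mul hnn hn
  have hrz : RowsPosOrZero (Mprod A n) := hPM ▸ hτ.mul hP (mprod_nonneg hnn τ₀)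
  rw [Real.norm_of_nonneg Metric.diam_nonneg, Real.norm_of_nonneg (Real.exp_pos _).le]
  refine Metric.diam_le_of_forall_dist_le (by positivity) fun y hy z hz => ?_
  refine (hsvd.dist_le_of_mem_rowDirections (mprod_nonneg hnn n) hrz (Real.exp_pos _) hcomp i₀
    (hsvd.diag_nonneg i₁) (fun c hc => hsvd.diag_anti (hi₁ c hc)) (hsvd.diag_anti hi₀) hσ hy
    hz).trans ?_
  calc 6 * p ^ 5 * Real.exp ((β - β') / 2 * n) ^ 2 * (S n i₁ i₁ / S n i₀ i₀)
      ≤ 6 * p ^ 5 * Real.exp ((β - β') / 2 * n) ^ 2 * Real.exp (β' * n) := by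
        gcongr
        exact (div_le_iff₀ hσ).mpr hratio
    _ = 6 * p ^ 5 * Real.exp (β * n) := by
        rw [← Real.exp_nat_mul, mul_assoc, ← Real.exp_add]
        ring_nf

theorem exists_limit_of_spectral_gap (hA : ∀ n, ColAllowable (A n)) {τ₀ : ℕ}
    (hτ : RowsPosOrZero (Mprod A τ₀)) (hS : ∀ n, ∃ U V, IsSVD (Mprod A n) U (S n) V)
    {i₀ i₁ : Fin p} (hi₁ : ∀ c, c ≠ i₀ → i₁ ≤ c) (hi₀ : i₀ ≤ i₁) {γ : EReal}
    (hγ : γ < 0)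
    (hgap : ∀ β : ℝ, γ < β → ∀ᶠ n in atTop,
      0 < S n i₀ i₀ ∧ S n i₁ i₁ ≤ Real.exp (β * n) * S n i₀ i₀)
    (hsub : ∀ ε : ℝ, 0 < ε → ∀ᶠ n in atTop, EntriesComparable (Mprod A n) (Real.exp (ε * n))) :
    ∃ v : Fin p → ℝ, Tendsto (fun n => sumNormalize (1 ᵥ* Mprod A n)) atTop (nhds v) ∧
      (∀ j, 0 < v j) ∧
      ∀ x w : Fin p → ℝ, (∀ j, 0 ≤ w j) → w ≠ 0 → ∀ i : Fin p,
        limsup (fun n : ℕ => (((n : ℝ)⁻¹ : ℝ) : EReal) * elog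
            |(Mprod A n).mulVec x i / (Mprod A n).mulVec w i -
              (∑ j, v j * x j) / (∑ j, v j * w j)|)
          (atTop ⊓ principal {n : ℕ | Mprod A n i ≠ 0}) ≤ γ := by
  have hnn : ∀ n i j, 0 ≤ Mprod A n i j := mprod_nonneg fun n => (hA n).1
  have hdiam := fun {β : ℝ} (hβ : γ < β) => isBigO_diam_rowDirections hA hτ hS hi₁ hi₀ hgap hsub hβ
  obtain ⟨β₀, hγβ₀, hβ₀⟩ := EReal.exists_between_coe_real hγ
  have hdiam₀ : Tendsto (fun n => Metric.diam (rowDirections (Mprod A n))) atTop (nhds 0) :=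
    (hdiam hγβ₀).trans_tendsto <| Real.tendsto_exp_atBot.comp <|
      tendsto_natCast_atTop_atTop.const_mul_atTop_of_neg (EReal.coe_lt_coe_iff.mp hβ₀)
  obtain ⟨v, hv, hvH⟩ := exists_tendsto_colSums hA i₀.pos hdiam₀
  have hvpos := hτ.pos_of_mem_convexHull (hvH τ₀)
  refine ⟨v, hv, hvpos, fun x w hw hw₀ i => EReal.le_of_forall_lt_iff_le.mp fun β hβ => ?_⟩
  exact limsup_inv_mul_elog_le inf_le_left <| isBigO_abs_left.mpr <|
    (isBigO_mulVec_div_mulVec_sub hnn hvpos hvH hdiam₀ hw hw₀ i).trans ((hdiam hβ).mono inf_le_left)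

end ProductLimit

section RandomProducts

open MeasureTheory

variable {p : ℕ} {Ω : Type*} [MeasurableSpace Ω]

lemma measurable_mprod_apply {AP : Ω → ℕ → Matrix (Fin p) (Fin p) ℝ}
    (h : ∀ n i j, Measurable fun ω => AP ω n i j) :
    ∀ n i j, Measurable fun ω => Mprod (AP ω) n i j
  | 0, _, _ => measurable_const
  | n + 1, i, j => by
    simp only [mprod_succ, Matrix.mul_apply]
    exact Finset.measurable_sum _ fun k _ => (h n i k).mul (measurable_mprod_apply h n k j)

lemma measurable_sumNormalize_colSums {AP : Ω → ℕ → Matrix (Fin p) (Fin p) ℝ}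
    (h : ∀ n i j, Measurable fun ω => AP ω n i j) (n : ℕ) (j : Fin p) :
    Measurable fun ω => sumNormalize (1 ᵥ* Mprod (AP ω) n) j := by
  have hM := measurable_mprod_apply h n
  simp only [sumNormalize, Matrix.vecMul, dotProduct, Pi.one_apply, one_mul, Pi.smul_apply,
    smul_eq_mul]
  exact (Finset.measurable_sum _ fun k _ => Finset.measurable_sum _ fun i _ => hM i k).inv.mul
    (Finset.measurable_sum _ fun i _ => hM i j)

lemma ae_forall_pos_of_mono {μ : Measure Ω} {P : Ω → ℝ → Prop}
    (hmono : ∀ᵐ ω ∂μ, ∀ ε ε', ε ≤ ε' → P ω ε → P ω ε') (h : ∀ ε, 0 < ε → ∀ᵐ ω ∂μ, P ω ε) :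
    ∀ᵐ ω ∂μ, ∀ ε, 0 < ε → P ω ε := by
  have hseq : ∀ᵐ ω ∂μ, ∀ k : ℕ, P ω (1 / (k + 1)) :=
    ae_all_iff.mpr fun k => h _ Nat.one_div_pos_of_nat
  filter_upwards [hmono, hseq] with ω hω hk ε hε
  obtain ⟨k, hk'⟩ := exists_nat_one_div_lt hε
  exact hω _ _ hk'.le (hk k)

lemma ae_eventually_entriesComparable {μ : Measure Ω} {AP : Ω → ℕ → Matrix (Fin p) (Fin p) ℝ}
    (hnn : ∀ᵐ ω ∂μ, ∀ n i j, 0 ≤ AP ω n i j)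
    (hsub : ∀ i j k : Fin p, ∀ ε : ℝ, 0 < ε → ∀ᵐ ω ∂μ, ∀ᶠ n in atTop,
      Mprod (AP ω) n j k = 0 ∨ Mprod (AP ω) n i k ≤ Real.exp (ε * n) * Mprod (AP ω) n j k) :
    ∀ᵐ ω ∂μ, ∀ ε, 0 < ε → ∀ᶠ n in atTop,
      EntriesComparable (Mprod (AP ω) n) (Real.exp (ε * n)) := by
  refine ae_forall_pos_of_mono ?_ fun ε hε => ?_
  · filter_upwards [hnn] with ω hω ε ε' hεε' h
    filter_upwards [h] with n hn
    exact hn.mono (mprod_nonneg hω n) (by gcongr)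
  · filter_upwards [ae_all_iff.mpr fun i => ae_all_iff.mpr fun j => ae_all_iff.mpr fun k =>
      hsub i j k ε hε] with ω hω
    exact eventually_all.mpr fun i => eventually_all.mpr fun j => eventually_all.mpr (hω i j)

end RandomProducts

/-- Under the hypotheses of Statement 0, with a positive spectral gap
`lam1 - lam2 > 0` and the weak subexponentiality condition on ratios of entries of `Mₙ`,
there is a measurable random vector `v¹`, a.s. strictly positive, such that for every
`x ∈ ℝᵖ`, every nonnegative nonzero `w`, and every row index `i`, almost surely
`limsup_{n → ∞, eᵢᵀMₙ ≠ 0} (1/n) log |(eᵢᵀMₙx)/(eᵢᵀMₙw) − (v¹·x)/(v¹·w)| ≤ -(lam1 - lam2)`. -/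
theorem statement2 {p : ℕ} (hp : 2 ≤ p) {Ω : Type*} [MeasurableSpace Ω]
    (μ : Measure Ω)
    (AP : Ω → ℕ → Matrix (Fin p) (Fin p) ℝ)
    (hAmeas : ∀ n i j, Measurable (fun ω => AP ω n i j))
    (hallow : ∀ᵐ ω ∂μ, ∀ n, ColAllowable (AP ω n))
    (τ : Ω → ℕ)
    (hprim : ∀ᵐ ω ∂μ, RowsPosOrZero (Mprod (AP ω) (τ ω)))
    (S : Ω → ℕ → Matrix (Fin p) (Fin p) ℝ)
    (hSVD : ∀ᵐ ω ∂μ, ∀ n, ∃ U V, IsSVD (Mprod (AP ω) n) U (S ω n) V)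
    (lam1 lam2 : EReal)
    (hlam1 : ∀ᵐ ω ∂μ, Tendsto
      (fun n : ℕ => (((n : ℝ)⁻¹ : ℝ) : EReal) * elog (S ω n ⟨0, by omega⟩ ⟨0, by omega⟩))
      atTop (nhds lam1))
    (hlam2 : ∀ᵐ ω ∂μ, Tendsto
      (fun n : ℕ => (((n : ℝ)⁻¹ : ℝ) : EReal) * elog (S ω n ⟨1, by omega⟩ ⟨1, by omega⟩))
      atTop (nhds lam2))
    (hgap : (0 : EReal) < lam1 - lam2)
    (hsub : ∀ i j k : Fin p, ∀ ε : ℝ, 0 < ε → ∀ᵐ ω ∂μ, ∀ᶠ n in atTop,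
      Mprod (AP ω) n j k = 0 ∨
        Mprod (AP ω) n i k ≤ Real.exp (ε * n) * Mprod (AP ω) n j k) :
    ∃ v1 : Ω → Fin p → ℝ, Measurable v1 ∧ (∀ᵐ ω ∂μ, ∀ i, 0 < v1 ω i) ∧
      ∀ x w : Fin p → ℝ, (∀ i, 0 ≤ w i) → w ≠ 0 → ∀ i : Fin p,
        ∀ᵐ ω ∂μ,
          Filter.limsup (fun n : ℕ => (((n : ℝ)⁻¹ : ℝ) : EReal) * elog
              |(Mprod (AP ω) n).mulVec x i / (Mprod (AP ω) n).mulVec w i -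
                (∑ j, v1 ω j * x j) / (∑ j, v1 ω j * w j)|)
            (atTop ⊓ Filter.principal {n : ℕ | Mprod (AP ω) n i ≠ 0})
            ≤ -(lam1 - lam2) := by
  have hcomp := ae_eventually_entriesComparable (hallow.mono fun ω h n => (h n).1) hsub
  have hlim := (hallow.and <| hprim.and <| hSVD.and <| hlam1.and <| hlam2.and hcomp).mono
    fun ω ⟨hA, hτ, hS, h₁, h₂, hc⟩ => exists_limit_of_spectral_gap hA hτ hS
      (i₀ := ⟨0, zero_lt_two.trans_le hp⟩) (i₁ := ⟨1, one_lt_two.trans_le hp⟩)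
      (fun c hc => Fin.le_def.mpr (Nat.one_le_iff_ne_zero.mpr fun h0 => hc (Fin.ext h0)))
      (Fin.le_def.mpr zero_le_one) (EReal.neg_lt_zero.mpr hgap)
      (fun β hβ => eventually_le_exp_mul_of_tendsto h₁ h₂ hβ) hc
  -- the coordinatewise `limsup` is the limit wherever that exists, and is measurable everywhere
  refine ⟨fun ω j => limsup (fun n => sumNormalize (1 ᵥ* Mprod (AP ω) n) j) atTop,
    measurable_pi_lambda _ fun j => Measurable.limsup fun n =>
      measurable_sumNormalize_colSums hAmeas n j, ?_, fun x w hw hw₀ i => ?_⟩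
  · filter_upwards [hlim] with ω hω j
    obtain ⟨v, hv, hpos, -⟩ := hω
    rw [(tendsto_pi_nhds.mp hv j).limsup_eq]
    exact hpos j
  · filter_upwards [hlim] with ω hω
    obtain ⟨v, hv, -, hrate⟩ := hω
    have hv1 : ∀ j, limsup (fun n => sumNormalize (1 ᵥ* Mprod (AP ω) n) j) atTop = v j :=
      fun j => (tendsto_pi_nhds.mp hv j).limsup_eq
    simpa only [hv1] using hrate x w hw hw₀ i
end

section
/- Let M be a nonzero nonnegative p×p real matrix each of whose rows is either strictly positive (all entries > 0) or identically zero. Suppose M = U Σ V is a singular value decomposition (U, V orthogonal, Σ = diag(σ¹,…,σᵖ) with σ¹ ≥ ⋯ ≥ σᵖ ≥ 0) in which the first row v¹ of V has all entries nonnegative. Then for every i ∈ {1,…,p}: the i-th row of M is zero if and only if U^{i1} = 0, where U^{i1} is the (i,1) entry of U. -/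
open MeasureTheory Filter Matrix
open scoped ENNReal

/-- Let `M` be a nonzero nonnegative `p×p` matrix each of whose rows is either
strictly positive or identically zero, and let `M = U Σ V` be an SVD in which the first row of
`V` is nonnegative. Then for every `i`, the `i`-th row of `M` is zero iff `U^{i1} = 0`. -/
theorem statement9 {p : ℕ} (hp : 1 ≤ p) (M U S V : Matrix (Fin p) (Fin p) ℝ)
    (hMne : M ≠ 0) (hMnn : ∀ i j, 0 ≤ M i j) (hrows : RowsPosOrZero M)
    (hsvd : IsSVD M U S V)
    (hV : ∀ j, 0 ≤ V ⟨0, hp⟩ j) :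
    ∀ i : Fin p, (∀ j, M i j = 0) ↔ U i ⟨0, hp⟩ = 0 := by
  obtain ⟨hUtU, hUUt, hVtV, hVVt, hSoff, hSnn, hSmono, hM⟩ := hsvd
  set z : Fin p := ⟨0, hp⟩ with hz
  -- M * Vᵀ = U * S
  have hMVt : M * Vᵀ = U * S := by
    rw [hM, Matrix.mul_assoc, Matrix.mul_assoc, hVVt, Matrix.mul_one]
  -- key entrywise equation
  have hkey : ∀ i : Fin p, ∑ j, M i j * V z j = U i z * S z z := by
    intro i
    have h1 : (M * Vᵀ) i z = ∑ j, M i j * V z j := by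
      simp [Matrix.mul_apply, Matrix.transpose_apply]
    have h2 : (U * S) i z = U i z * S z z := by
      rw [Matrix.mul_apply]
      exact Finset.sum_eq_single z (fun k _ hk => by rw [hSoff k z hk, mul_zero])
        (fun h => absurd (Finset.mem_univ z) h)
    rw [← h1, hMVt, h2]
  -- σ₁ > 0
  have hσpos : 0 < S z z := by
    rcases lt_or_eq_of_le (hSnn z) with h | h
    · exact h
    · exfalso; apply hMne
      have hS0 : S = 0 := by
        ext i j
        by_cases hij : i = j
        · subst hij
          have hle : S i i ≤ S z z := hSmono z i (by simp [hz, Fin.le_def])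
        
          have := hSnn i
          simp only [Matrix.zero_apply]
          linarith [hle, hSnn i, h.symm.le]
        · simp [hSoff i j hij]
      rw [hM, hS0, Matrix.mul_zero, Matrix.zero_mul]
  intro i
  constructor
  · intro hrow
    have := hkey i
    rw [Finset.sum_eq_zero (fun j _ => by rw [hrow j, zero_mul])] at this
    rcases mul_eq_zero.mp this.symm with h | h
    · exact h
    · exact absurd h (ne_of_gt hσpos)
  · intro hU j
    rcases hrows i with hpos | hzero
    · exfalso
      have hsum : ∑ j, M i j * V z j = 0 := by rw [hkey i, hU, zero_mul]
      have hterm : ∀ j ∈ Finset.univ, M i j * V z j = 0 :=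
        (Finset.sum_eq_zero_iff_of_nonneg
          (fun j _ => mul_nonneg (hMnn i j) (hV j))).mp hsum
      have hVz : ∀ j, V z j = 0 := fun j => by
        have := hterm j (Finset.mem_univ j)
        rcases mul_eq_zero.mp this with h | h
        · exact absurd h (ne_of_gt (hpos j))
        · exact h
      have h1 : (V * Vᵀ) z z = 1 := by rw [hVVt]; simp
      rw [Matrix.mul_apply] at h1
      simp [Matrix.transpose_apply, hVz] at h1
    · exact hzero j
end

section
/- Let M, B and X be p×p real matrices with M = BX. Assume that each row of B is either strictly positive (all entries > 0) or identically zero, and that X is nonnegative and column-allowable (no zero column). Then each row of M is either strictly positive or identically zero, and for each i the i-th row of M is zero if and only if the i-th row of B is zero. Moreover, for every pair of row indices (i, j) such that the i-th and j-th rows of B are strictly positive, and every column index k: min_r (B^{ir}/B^{jr}) ≤ M^{ik}/M^{jk} ≤ max_r (B^{ir}/B^{jr}). -/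
open MeasureTheory Filter Matrix
open scoped ENNReal

/-- Let `M = B * X` where every row of `B` is strictly positive or zero and
`X` is nonnegative with no zero column. Then every row of `M` is strictly positive or zero,
the zero rows of `M` are exactly those of `B`, and for all row indices `i, j` with strictly
positive rows of `B` and every column index `k`,
`min_r B^{ir}/B^{jr} ≤ M^{ik}/M^{jk} ≤ max_r B^{ir}/B^{jr}`. -/
theorem statement11 {p : ℕ} (hp : 1 ≤ p) (M B X : Matrix (Fin p) (Fin p) ℝ)
    (hM : M = B * X)
    (hB : RowsPosOrZero B)
    (hX : ColAllowable X) :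
    RowsPosOrZero M ∧
    (∀ i : Fin p, (∀ k, M i k = 0) ↔ (∀ k, B i k = 0)) ∧
    (∀ i j k : Fin p, (∀ r, 0 < B i r) → (∀ r, 0 < B j r) →
      Finset.univ.inf' ⟨⟨0, hp⟩, Finset.mem_univ _⟩ (fun r => B i r / B j r) ≤ M i k / M j k ∧
      M i k / M j k ≤
        Finset.univ.sup' ⟨⟨0, hp⟩, Finset.mem_univ _⟩ (fun r => B i r / B j r)) := by
  subst hM
  obtain ⟨hXnn, hXcol⟩ := hX
  have key : ∀ i, (∀ r, 0 < B i r) → ∀ k, 0 < (B * X) i k := by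
    intro i hi k
    obtain ⟨r0, hr0⟩ := hXcol k
    rw [Matrix.mul_apply]
    exact Finset.sum_pos' (fun r _ => mul_nonneg (hi r).le (hXnn r k))
      ⟨r0, Finset.mem_univ _, mul_pos (hi r0) hr0⟩
  have keyz : ∀ i, (∀ r, B i r = 0) → ∀ k, (B * X) i k = 0 := by
    intro i hi k
    rw [Matrix.mul_apply]
    simp [hi]
  refine ⟨?_, ?_, ?_⟩
  · intro i
    rcases hB i with h | h
    · exact Or.inl (key i h)
    · exact Or.inr (keyz i h)
  · intro i
    constructor
    · intro hMz
      rcases hB i with h | h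
      · exact absurd (hMz ⟨0, hp⟩) (ne_of_gt (key i h ⟨0, hp⟩))
      · exact h
    · exact keyz i
  · intro i j k hi hj
    have hMj : 0 < (B * X) j k := key j hj k
    constructor
    · set m := Finset.univ.inf' ⟨⟨0, hp⟩, Finset.mem_univ _⟩ (fun r => B i r / B j r) with hmdef
      have hm : ∀ r, m * B j r ≤ B i r := by
        intro r
        have h1 : m ≤ B i r / B j r := Finset.inf'_le _ (Finset.mem_univ r)
        exact (le_div_iff₀ (hj r)).mp h1
      rw [le_div_iff₀ hMj, Matrix.mul_apply, Matrix.mul_apply, Finset.mul_sum]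
      apply Finset.sum_le_sum
      intro r _
      have := hm r
      have := hXnn r k
      nlinarith
    · set m := Finset.univ.sup' ⟨⟨0, hp⟩, Finset.mem_univ _⟩ (fun r => B i r / B j r) with hmdef
      have hm : ∀ r, B i r ≤ m * B j r := by
        intro r
        have h1 : B i r / B j r ≤ m := Finset.le_sup' (fun r => B i r / B j r) (Finset.mem_univ r)
        exact (div_le_iff₀ (hj r)).mp h1
      rw [div_le_iff₀ hMj, Matrix.mul_apply, Matrix.mul_apply, Finset.mul_sum]
      apply Finset.sum_le_sum
      intro r _
      have := hm r
      have := hXnn r k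
      nlinarith
end

section
/- Let (A_n)_{n≥1} be a strictly stationary ergodic process of nonnegative column-allowable p×p matrices which is weakly sequentially primitive. Suppose there exist constants 0 < α ≤ β such that almost surely every strictly positive entry of every A_n lies in the interval [α, β], and that E[ψ₁] < ∞, where ψ_n is the index of weak forward sequential primitivity: ψ_n = min{ψ ≥ 1 : every row of A_{n+ψ−1} A_{n+ψ−2} ⋯ A_n is either strictly positive or identically zero}. Then the weak subexponentiality condition on ratios of entries of M_n holds: for every pair of row indices i, j, every column index k, and every ε > 0, almost surely for all but finitely many n, either M_n^{jk} = 0 or M_n^{ik} ≤ e^{εn} M_n^{jk}. -/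
open MeasureTheory Filter Matrix
open scoped ENNReal

namespace St12

variable {p : ℕ} {α β : ℝ}

/-- product of the segment `A (m+q-1) ⋯ A m`. -/
def Pseg (A : ℕ → Matrix (Fin p) (Fin p) ℝ) (m q : ℕ) : Matrix (Fin p) (Fin p) ℝ :=
  Mprod (fun l => A (l + m)) q

lemma Mprod_succ (A : ℕ → Matrix (Fin p) (Fin p) ℝ) (n : ℕ) :
    Mprod A (n + 1) = A n * Mprod A n := rfl

lemma Mprod_add (A : ℕ → Matrix (Fin p) (Fin p) ℝ) (m q : ℕ) :
    Mprod A (m + q) = Pseg A m q * Mprod A m := by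
  induction q with
  | zero => simp [Pseg, Mprod]
  | succ q ih =>
      have h1 : Pseg A m (q + 1) = A (q + m) * Pseg A m q := rfl
      have h2 : m + (q + 1) = (m + q) + 1 := rfl
      rw [h2, Mprod_succ, ih, h1, Matrix.mul_assoc, Nat.add_comm q m]

section Bounds

variable (hα : 0 < α) (hαβ : α ≤ β)
variable {A : ℕ → Matrix (Fin p) (Fin p) ℝ}
variable (hb : ∀ n i j, A n i j = 0 ∨ (α ≤ A n i j ∧ A n i j ≤ β))

include hα hb

lemma entry_nonneg (n : ℕ) (i j : Fin p) : 0 ≤ A n i j := by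
  rcases hb n i j with h | h
  · exact h.symm.le
  · exact le_trans hα.le h.1

lemma Mprod_nonneg (n : ℕ) (i j : Fin p) : 0 ≤ Mprod A n i j := by
  induction n generalizing i j with
  | zero =>
      show (0:ℝ) ≤ (1 : Matrix (Fin p) (Fin p) ℝ) i j
      rw [Matrix.one_apply]
      split <;> norm_num
  | succ n ih =>
      rw [Mprod_succ, Matrix.mul_apply]
      exact Finset.sum_nonneg fun t _ => mul_nonneg (entry_nonneg hα hb n i t) (ih t j)

include hαβ in
lemma Mprod_upper (n : ℕ) (i j : Fin p) : Mprod A n i j ≤ ((p:ℝ) * β) ^ n := by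
  have hβ : 0 ≤ β := le_trans hα.le hαβ
  induction n generalizing i j with
  | zero =>
      show (1 : Matrix (Fin p) (Fin p) ℝ) i j ≤ 1
      rw [Matrix.one_apply]
      split <;> norm_num
  | succ n ih =>
      rw [Mprod_succ, Matrix.mul_apply]
      have hA : ∀ t : Fin p, A n i t ≤ β := by
        intro t
        rcases hb n i t with h | h
        · rw [h]; exact hβ
        · exact h.2
      calc ∑ t, A n i t * Mprod A n t j
          ≤ ∑ t : Fin p, β * ((p:ℝ) * β) ^ n := by
            refine Finset.sum_le_sum fun t _ => ?_
            exact mul_le_mul (hA t) (ih t j) (Mprod_nonneg hα hb n t j) hβ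
        _ = (p:ℝ) * (β * ((p:ℝ)*β)^n) := by
            rw [Finset.sum_const, Finset.card_univ, Fintype.card_fin, nsmul_eq_mul]
        _ = ((p:ℝ) * β) ^ (n+1) := by ring

lemma Mprod_pos_lower (n : ℕ) (i j : Fin p) (h : 0 < Mprod A n i j) :
    α ^ n ≤ Mprod A n i j := by
  induction n generalizing i j with
  | zero =>
      show (1:ℝ) ≤ (1 : Matrix (Fin p) (Fin p) ℝ) i j
      revert h
      show (0:ℝ) < (1 : Matrix (Fin p) (Fin p) ℝ) i j → _
      rw [Matrix.one_apply]
      split <;> norm_num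
  | succ n ih =>
      rw [Mprod_succ, Matrix.mul_apply] at h ⊢
      have hne : ∃ t : Fin p, A n i t * Mprod A n t j ≠ 0 := by
        by_contra hcon
        push_neg at hcon
        rw [Finset.sum_eq_zero fun t _ => hcon t] at h
        exact lt_irrefl 0 h
      obtain ⟨t, ht⟩ := hne
      have hAt : 0 < A n i t := by
        rcases (entry_nonneg hα hb n i t).lt_or_eq with h' | h'
        · exact h'
        · exact absurd (by rw [← h', zero_mul]) ht
      have hMt : 0 < Mprod A n t j := by
        rcases (Mprod_nonneg hα hb n t j).lt_or_eq with h' | h'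
        · exact h'
        · exact absurd (by rw [← h', mul_zero]) ht
      have hA : α ≤ A n i t := by
        rcases hb n i t with h' | h'
        · exact absurd h'.symm hAt.ne
        · exact h'.1
      calc α ^ (n+1) = α * α ^ n := by ring
        _ ≤ A n i t * Mprod A n t j :=
            mul_le_mul hA (ih t j hMt) (pow_nonneg hα.le n) (le_trans hα.le hA)
        _ ≤ ∑ u, A n i u * Mprod A n u j := by
            refine Finset.single_le_sum (f := fun u => A n i u * Mprod A n u j)
              (fun u _ => mul_nonneg (entry_nonneg hα hb n i u) (Mprod_nonneg hα hb n u j))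
              (Finset.mem_univ t)

include hαβ in
/-- The key deterministic comparison lemma. -/
lemma key (m ψq n : ℕ) (hmn : m + ψq ≤ n)
    (hB : RowsPosOrZero (Pseg A m ψq)) (i j k : Fin p) :
    Mprod A n j k = 0 ∨
      Mprod A n i k ≤ (p:ℝ) * (((p:ℝ) * β / α) ^ (n - m)) * Mprod A n j k := by
  by_cases h0 : Mprod A n j k = 0
  · exact Or.inl h0
  right
  obtain ⟨q, hq⟩ : ∃ q, n = (m + ψq) + q := ⟨n - (m + ψq), by omega⟩
  have hb' : ∀ (m' : ℕ) (l : ℕ) (i j : Fin p),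
      (fun l => A (l + m')) l i j = 0 ∨
        (α ≤ (fun l => A (l + m')) l i j ∧ (fun l => A (l + m')) l i j ≤ β) :=
    fun m' l i j => hb (l + m') i j
  set B := Pseg A m ψq with hBdef
  set C := Pseg A (m + ψq) q with hCdef
  set M := Mprod A m with hMdef
  have hsplit : Mprod A n = C * (B * M) := by
    rw [hq, Mprod_add, Mprod_add]
  -- basic bounds
  have hBnn : ∀ l t, 0 ≤ B l t := fun l t => Mprod_nonneg hα (hb' m) ψq l t
  have hBub : ∀ l t, B l t ≤ ((p:ℝ)*β)^ψq := fun l t => Mprod_upper hα hαβ (hb' m) ψq l t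
  have hBlb : ∀ l t, 0 < B l t → α ^ ψq ≤ B l t := fun l t => Mprod_pos_lower hα (hb' m) ψq l t
  have hCnn : ∀ l t, 0 ≤ C l t := fun l t => Mprod_nonneg hα (hb' (m+ψq)) q l t
  have hCub : ∀ l t, C l t ≤ ((p:ℝ)*β)^q := fun l t => Mprod_upper hα hαβ (hb' (m+ψq)) q l t
  have hClb : ∀ l t, 0 < C l t → α ^ q ≤ C l t := fun l t => Mprod_pos_lower hα (hb' (m+ψq)) q l t
  have hMnn : ∀ t, 0 ≤ M t k := fun t => Mprod_nonneg hα hb m t k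
  set s : ℝ := ∑ t, M t k with hsdef
  have hs0 : 0 ≤ s := Finset.sum_nonneg fun t _ => hMnn t
  set w : Fin p → ℝ := fun l => (B * M) l k with hwdef
  have hwnn : ∀ l, 0 ≤ w l := fun l => by
    simp only [hwdef, Matrix.mul_apply]
    exact Finset.sum_nonneg fun t _ => mul_nonneg (hBnn l t) (hMnn t)
  have hwub : ∀ l, w l ≤ ((p:ℝ)*β)^ψq * s := by
    intro l
    have hpb : (0:ℝ) ≤ ((p:ℝ)*β)^ψq :=
      pow_nonneg (mul_nonneg (Nat.cast_nonneg p) (le_trans hα.le hαβ)) _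
    simp only [hwdef, Matrix.mul_apply, hsdef]
    rw [Finset.mul_sum]
    exact Finset.sum_le_sum fun t _ =>
      mul_le_mul_of_nonneg_right (hBub l t) (hMnn t)
  have hMn : ∀ i', Mprod A n i' k = ∑ l, C i' l * w l := by
    intro i'
    rw [hsplit, Matrix.mul_apply]
  -- positivity of the j entry yields a lower bound
  have hjpos : 0 < Mprod A n j k :=
    lt_of_le_of_ne (Mprod_nonneg hα hb n j k) (Ne.symm h0)
  have hterm : ∃ l, 0 < C j l * w l := by
    by_contra hcon
    push_neg at hcon
    have : Mprod A n j k ≤ 0 := by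
      rw [hMn j]
      refine Finset.sum_nonpos fun l _ => hcon l
    exact absurd hjpos (not_lt.mpr this)
  obtain ⟨l, hl⟩ := hterm
  have hCjl : 0 < C j l := by
    rcases (hCnn j l).lt_or_eq with h' | h'
    · exact h'
    · exact absurd (by rw [← h', zero_mul]) hl.ne'
  have hwl : 0 < w l := by
    rcases (hwnn l).lt_or_eq with h' | h'
    · exact h'
    · exact absurd (by rw [← h', mul_zero]) hl.ne'
  have hrowl : ∀ t, 0 < B l t := by
    rcases hB l with h' | h'
    · exact h'
    · exfalso
      have : w l = 0 := by
        simp only [hwdef, Matrix.mul_apply]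
        exact Finset.sum_eq_zero fun t _ => by rw [h' t, zero_mul]
      exact hwl.ne' this
  have hwlb : α ^ ψq * s ≤ w l := by
    simp only [hwdef, Matrix.mul_apply, hsdef]
    rw [Finset.mul_sum]
    exact Finset.sum_le_sum fun t _ =>
      mul_le_mul_of_nonneg_right (hBlb l t (hrowl t)) (hMnn t)
  have hjlb : α ^ q * (α ^ ψq * s) ≤ Mprod A n j k := by
    rw [hMn j]
    calc α ^ q * (α ^ ψq * s) ≤ C j l * w l :=
          mul_le_mul (hClb j l hCjl) hwlb (mul_nonneg (pow_nonneg hα.le _) hs0) (hCnn j l)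
      _ ≤ ∑ u, C j u * w u :=
          Finset.single_le_sum (f := fun u => C j u * w u)
            (fun u _ => mul_nonneg (hCnn j u) (hwnn u)) (Finset.mem_univ l)
  have hiub : Mprod A n i k ≤ (p:ℝ) * (((p:ℝ)*β)^q * (((p:ℝ)*β)^ψq * s)) := by
    rw [hMn i]
    have hpb : (0:ℝ) ≤ ((p:ℝ)*β)^q :=
      pow_nonneg (mul_nonneg (Nat.cast_nonneg p) (le_trans hα.le hαβ)) _
    calc ∑ l', C i l' * w l'
        ≤ ∑ _l' : Fin p, ((p:ℝ)*β)^q * (((p:ℝ)*β)^ψq * s) := by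
          refine Finset.sum_le_sum fun l' _ => ?_
          exact mul_le_mul (hCub i l') (hwub l') (hwnn l') hpb
      _ = (p:ℝ) * (((p:ℝ)*β)^q * (((p:ℝ)*β)^ψq * s)) := by
          rw [Finset.sum_const, Finset.card_univ, Fintype.card_fin, nsmul_eq_mul]
  -- combine
  have hd : n - m = q + ψq := by omega
  have hαne : (α : ℝ) ≠ 0 := hα.ne'
  have hfinal : (p:ℝ) * (((p:ℝ)*β)^q * (((p:ℝ)*β)^ψq * s))
      = (p:ℝ) * (((p:ℝ) * β / α) ^ (n - m)) * (α ^ q * (α ^ ψq * s)) := by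
    rw [hd, div_pow]
    field_simp
    ring
  calc Mprod A n i k ≤ (p:ℝ) * (((p:ℝ)*β)^q * (((p:ℝ)*β)^ψq * s)) := hiub
    _ = (p:ℝ) * (((p:ℝ) * β / α) ^ (n - m)) * (α ^ q * (α ^ ψq * s)) := hfinal
    _ ≤ (p:ℝ) * (((p:ℝ) * β / α) ^ (n - m)) * Mprod A n j k := by
        refine mul_le_mul_of_nonneg_left hjlb ?_
        have : (0:ℝ) ≤ (p:ℝ) * β / α :=
          div_nonneg (mul_nonneg (Nat.cast_nonneg p) (le_trans hα.le hαβ)) hα.le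
        exact mul_nonneg (Nat.cast_nonneg p) (pow_nonneg this _)

end Bounds

end St12

namespace St12

lemma tsum_ite_lt (N : ℕ) : ∑' (m : ℕ), (if m < N then (1:ℝ≥0∞) else 0) = N := by
  rw [tsum_eq_sum (s := Finset.range N) (fun m hm => if_neg (by simpa using hm))]
  rw [Finset.sum_congr rfl (fun m hm => if_pos (Finset.mem_range.mp hm))]
  simp

lemma tsum_meas_eq_lintegral {Ω : Type*} [MeasurableSpace Ω] (μ : Measure Ω)
    (g : Ω → ℕ) (hg : Measurable g) :
    ∑' (m : ℕ), μ {ω | m < g ω} = ∫⁻ ω, (g ω : ℝ≥0∞) ∂μ := by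
  have hmeas : ∀ m : ℕ, MeasurableSet {ω | m < g ω} :=
    fun m => hg (MeasurableSet.of_discrete)
  calc ∑' (m : ℕ), μ {ω | m < g ω}
      = ∑' (m : ℕ), ∫⁻ ω, ({ω | m < g ω}).indicator (fun _ => (1:ℝ≥0∞)) ω ∂μ := by
        refine tsum_congr fun m => ?_
        rw [← lintegral_indicator_one (hmeas m)]; rfl
    _ = ∫⁻ ω, ∑' (m : ℕ), ({ω | m < g ω}).indicator (fun _ => (1:ℝ≥0∞)) ω ∂μ :=
        (lintegral_tsum fun m => (measurable_const.indicator (hmeas m)).aemeasurable).symm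
    _ = ∫⁻ ω, (g ω : ℝ≥0∞) ∂μ := by
        refine lintegral_congr fun ω => ?_
        have : ∀ m : ℕ, ({ω | m < g ω}).indicator (fun _ => (1:ℝ≥0∞)) ω
            = (if m < g ω then (1:ℝ≥0∞) else 0) := by
          intro m
          simp [Set.indicator_apply, Set.mem_setOf_eq]
        rw [tsum_congr this, tsum_ite_lt (g ω)]

lemma AP_iterate {p : ℕ} {Ω : Type*} (T : Ω → Ω) (AP : Ω → ℕ → Matrix (Fin p) (Fin p) ℝ)
    (hstat : ∀ ω n, AP ω (n + 1) = AP (T ω) n) :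
    ∀ (m : ℕ) (ω : Ω) (l : ℕ), AP (T^[m] ω) l = AP ω (l + m) := by
  intro m
  induction m with
  | zero => intro ω l; simp
  | succ m ih =>
      intro ω l
      rw [Function.iterate_succ_apply, ih (T ω) l, ← hstat ω (l + m), Nat.add_assoc]

lemma Mprod_iterate {p : ℕ} {Ω : Type*} (T : Ω → Ω) (AP : Ω → ℕ → Matrix (Fin p) (Fin p) ℝ)
    (hstat : ∀ ω n, AP ω (n + 1) = AP (T ω) n) (m : ℕ) (ω : Ω) (q : ℕ) :
    Mprod (AP (T^[m] ω)) q = Pseg (AP ω) m q := by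
  have h : AP (T^[m] ω) = fun l => AP ω (l + m) := funext (AP_iterate T AP hstat m ω)
  rw [Pseg, h]

end St12

/-- Let `(Aₙ)` be a strictly stationary ergodic, weakly sequentially primitive
process of nonnegative column-allowable matrices whose strictly positive entries all lie in a
fixed interval `[α, β]` with `0 < α ≤ β`, and whose index of weak forward sequential primitivity
`ψ₁` (the least `ψ ≥ 1` such that every row of `A_ψ ⋯ A_1` is strictly positive or zero) has
finite expectation. Then the weak subexponentiality condition on ratios of entries of `Mₙ`
holds. -/
theorem statement12 {p : ℕ} (hp : 1 ≤ p) {Ω : Type*} [MeasurableSpace Ω]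
    (μ : Measure Ω) [IsProbabilityMeasure μ]
    (T : Ω → Ω) (hT : Ergodic T μ)
    (AP : Ω → ℕ → Matrix (Fin p) (Fin p) ℝ)
    (hAmeas : ∀ n i j, Measurable (fun ω => AP ω n i j))
    (hstat : ∀ ω n, AP ω (n + 1) = AP (T ω) n)
    (hallow : ∀ᵐ ω ∂μ, ∀ n, ColAllowable (AP ω n))
    (τ : Ω → ℕ) (hτmeas : Measurable τ)
    (hprim : ∀ᵐ ω ∂μ, RowsPosOrZero (Mprod (AP ω) (τ ω)))
    (α β : ℝ) (hα : 0 < α) (hαβ : α ≤ β)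
    (hbound : ∀ᵐ ω ∂μ, ∀ n i j, AP ω n i j = 0 ∨ (α ≤ AP ω n i j ∧ AP ω n i j ≤ β))
    (ψ1 : Ω → ℕ) (hψmeas : Measurable ψ1)
    (hψ : ∀ᵐ ω ∂μ, 1 ≤ ψ1 ω ∧ RowsPosOrZero (Mprod (AP ω) (ψ1 ω)) ∧
      ∀ k, 1 ≤ k → k < ψ1 ω → ¬ RowsPosOrZero (Mprod (AP ω) k))
    (hψint : ∫⁻ ω, (ψ1 ω : ℝ≥0∞) ∂μ < ⊤) :
    ∀ i j k : Fin p, ∀ ε : ℝ, 0 < ε → ∀ᵐ ω ∂μ, ∀ᶠ n in atTop,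
      Mprod (AP ω) n j k = 0 ∨
        Mprod (AP ω) n i k ≤ Real.exp (ε * n) * Mprod (AP ω) n j k := by
  intro i j k ε hε
  have hβ : 0 < β := lt_of_lt_of_le hα hαβ
  have hp' : (1:ℝ) ≤ (p:ℝ) := by exact_mod_cast hp
  set r : ℝ := (p:ℝ) * β / α with hrdef
  have hr1 : 1 ≤ r := by
    rw [hrdef, le_div_iff₀ hα]
    nlinarith
  have hr0 : 0 < r := lt_of_lt_of_le one_pos hr1
  have hlogr : 0 ≤ Real.log r := Real.log_nonneg hr1
  set K : ℕ := max 2 (⌈2 * Real.log r / ε⌉₊ + 1) with hKdef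
  have hK2 : 2 ≤ K := le_max_left _ _
  have hK0 : 0 < K := by omega
  have hKr : 2 * Real.log r ≤ ε * K := by
    have h1 : (⌈2 * Real.log r / ε⌉₊ : ℝ) ≤ (K:ℝ) := by
      have : ⌈2 * Real.log r / ε⌉₊ ≤ K := le_trans (Nat.le_succ _) (le_max_right _ _)
      exact_mod_cast this
    have h2 : 2 * Real.log r / ε ≤ (⌈2 * Real.log r / ε⌉₊ : ℝ) := Nat.le_ceil _
    have h3 : 2 * Real.log r / ε ≤ (K:ℝ) := le_trans h2 h1
    calc 2 * Real.log r = 2 * Real.log r / ε * ε := by field_simp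
      _ ≤ (K:ℝ) * ε := mul_le_mul_of_nonneg_right h3 hε.le
      _ = ε * K := mul_comm _ _
  have hmp : MeasurePreserving T μ μ := hT.toMeasurePreserving
  -- Borel–Cantelli: eventually `K * ψ1 (T^[m] ω) ≤ m`
  set g : Ω → ℕ := fun ω => K * ψ1 ω with hgdef
  have hgmeas : Measurable g := hψmeas.const_mul K
  have hgint : ∫⁻ ω, (g ω : ℝ≥0∞) ∂μ ≠ ⊤ := by
    have hcast : (fun ω => ((g ω : ℕ) : ℝ≥0∞)) = fun ω => (K:ℝ≥0∞) * ((ψ1 ω : ℕ) : ℝ≥0∞) := by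
      funext ω; simp [hgdef, Nat.cast_mul]
    have hf : Measurable (fun ω => ((ψ1 ω : ℕ) : ℝ≥0∞)) := measurable_from_nat.comp hψmeas
    rw [hcast, lintegral_const_mul (K:ℝ≥0∞) hf]
    exact (ENNReal.mul_lt_top (by simp) hψint).ne
  have hsum : ∑' (m : ℕ), μ {ω | m < g (T^[m] ω)} ≠ ∞ := by
    have heq : ∀ m : ℕ, μ {ω | m < g (T^[m] ω)} = μ {ω | m < g ω} := by
      intro m
      have hpre : {ω | m < g (T^[m] ω)} = (T^[m]) ⁻¹' {ω | m < g ω} := rfl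
      have hms : MeasurableSet {ω | m < g ω} :=
        hgmeas (MeasurableSet.of_discrete (s := {t : ℕ | m < t}))
      rw [hpre, (hmp.iterate m).measure_preimage hms.nullMeasurableSet]
    rw [tsum_congr heq, St12.tsum_meas_eq_lintegral μ g hgmeas]
    exact hgint
  have hBC : ∀ᵐ ω ∂μ, ∀ᶠ m in atTop, ¬ (m < g (T^[m] ω)) :=
    ae_eventually_notMem hsum
  -- shifted primitivity
  have hψshift : ∀ᵐ ω ∂μ, ∀ m : ℕ,
      RowsPosOrZero (Mprod (AP (T^[m] ω)) (ψ1 (T^[m] ω))) := by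
    rw [ae_all_iff]
    intro m
    exact ((hmp.iterate m).quasiMeasurePreserving.ae hψ).mono fun ω h => h.2.1
  filter_upwards [hbound, hψshift, hBC] with ω hbω hψω hbcω
  obtain ⟨M₀, hM₀⟩ := eventually_atTop.mp hbcω
  refine eventually_atTop.mpr ⟨max (2*M₀ + 2*K + 2) (⌈2 * Real.log p / ε⌉₊ + 1), fun n hn => ?_⟩
  have hnM : 2*M₀ + 2*K + 2 ≤ n := le_trans (le_max_left _ _) hn
  have hn1 : ⌈2 * Real.log p / ε⌉₊ + 1 ≤ n := le_trans (le_max_right _ _) hn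
  obtain ⟨d, hddef⟩ : ∃ d, n / K = d := ⟨_, rfl⟩
  obtain ⟨m, hmdef⟩ : ∃ m, n - d = m := ⟨_, rfl⟩
  have hKd : K * d ≤ n := by rw [← hddef, mul_comm]; exact Nat.div_mul_le_self n K
  have hd2 : d ≤ n / 2 := by rw [← hddef]; exact Nat.div_le_div_left hK2 (by omega)
  have hn2 : n / 2 * 2 ≤ n := Nat.div_mul_le_self n 2
  have hdn : d ≤ n := by rw [← hddef]; exact Nat.div_le_self n K
  have hm0 : M₀ ≤ m := by omega
  have hψm : K * ψ1 (T^[m] ω) ≤ m := not_lt.mp (hM₀ m hm0)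
  have hψd : ψ1 (T^[m] ω) ≤ d := by
    rw [← hddef, Nat.le_div_iff_mul_le hK0, mul_comm]
    omega
  have hmn : m + ψ1 (T^[m] ω) ≤ n := by omega
  have hB : RowsPosOrZero (St12.Pseg (AP ω) m (ψ1 (T^[m] ω))) := by
    rw [← St12.Mprod_iterate T AP hstat m ω]
    exact hψω m
  rcases St12.key hα hαβ hbω m (ψ1 (T^[m] ω)) n hmn hB i j k with h | h
  · exact Or.inl h
  · right
    refine le_trans h (mul_le_mul_of_nonneg_right ?_ (St12.Mprod_nonneg hα hbω n j k))
    have hnm : n - m = d := by omega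
    rw [hnm, ← hrdef]
    -- show `p * r ^ d ≤ exp (ε * n)`
    have h1 : (p:ℝ) ≤ Real.exp (ε * n / 2) := by
      have hc : 2 * Real.log p / ε ≤ (n:ℝ) := by
        have : (⌈2 * Real.log p / ε⌉₊ : ℝ) ≤ (n:ℝ) := by exact_mod_cast (by omega : ⌈2 * Real.log p / ε⌉₊ ≤ n)
        exact le_trans (Nat.le_ceil _) this
      have hlp : Real.log p ≤ ε * n / 2 := by
        rw [div_le_iff₀ hε] at hc
        nlinarith
      calc (p:ℝ) = Real.exp (Real.log p) := (Real.exp_log (by linarith)).symm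
        _ ≤ Real.exp (ε * n / 2) := Real.exp_le_exp.mpr hlp
    have h2 : r ^ d ≤ Real.exp (ε * n / 2) := by
      have hKd' : (K:ℝ) * (d:ℝ) ≤ (n:ℝ) := by exact_mod_cast hKd
      have hdl : (d:ℝ) * Real.log r ≤ ε * n / 2 := by
        have hd0 : (0:ℝ) ≤ (d:ℝ) := Nat.cast_nonneg d
        nlinarith [mul_le_mul_of_nonneg_left hKr hd0, mul_le_mul_of_nonneg_left hKd' hε.le]
      calc r ^ d = Real.exp (Real.log r) ^ d := by rw [Real.exp_log hr0]
        _ = Real.exp ((d:ℝ) * Real.log r) := (Real.exp_nat_mul _ d).symm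
        _ ≤ Real.exp (ε * n / 2) := Real.exp_le_exp.mpr hdl
    calc (p:ℝ) * r ^ d ≤ Real.exp (ε * n / 2) * Real.exp (ε * n / 2) :=
          mul_le_mul h1 h2 (pow_nonneg hr0.le d) (Real.exp_nonneg _)
      _ = Real.exp (ε * n) := by rw [← Real.exp_add]; ring_nf
end
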